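/- Let (R, m) be a commutative Noetherian local ring and let M be a complete R-module. Then every prime ideal p ∈ Koatt(M) is an intersection of associated primes of M, i.e. there is a family (p_λ) of elements of Ass(M) with p = ⋂_λ p_λ. -/

import Mathlib

open IsLocalRing TensorProduct

universe u v w x

/-- `Koatt M`: the set of prime ideals that are annihilators of submodules of `M`. -/
def Koatt (R : Type u) [CommRing R] (M : Type v) [AddCommGroup M] [Module R M] :
    Set (Ideal R) :=
  {p | p.IsPrime ∧ ∃ U : Submodule R M, U.annihilator = p}

/-!
Write `p = Ann U`. It suffices that every `a ∉ p` lies outside some associated prime `q ⊇ p`,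
for then `p` is the intersection of these `q`.

If `𝔪 ⊆ p`, then `a` is a unit and any nonzero `x ∈ U` has `p ⊆ Ann x` and `aⁱx ≠ 0` for all `i`.
Otherwise `Ann (U ∩ 𝔪ᵏM) = p` for every `k`, so each `U ∩ 𝔪ᵏM` contains elements not killed
by `aⁿ`. Adding such elements of ever higher `𝔪`-adic order gives a Cauchy sequence in `U`
whose limit `x` is killed by `p` (a limit of elements of `U`) but by no power of `a`.

Finally, in a Noetherian ring the chain `Ann (aⁱx)` stabilises at some `y = aⁿx`; then `a` is a
nonzerodivisor on `Ry`, so any associated prime of `Ry` containing `Ann y ⊇ Ann x` avoids `a`.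
-/

theorem exists_seq_of_forall_exists_succ {α : Type*} {P : ℕ → α → Prop} {Q : α → α → Prop}
    {x₀ : α} (h₀ : P 0 x₀) (hsucc : ∀ k x, P k x → ∃ y, P (k + 1) y ∧ Q x y) :
    ∃ f : ℕ → α, ∀ k, P k (f k) ∧ Q (f k) (f (k + 1)) := by
  choose g hgP hgQ using hsucc
  let f : ∀ k, {x // P k x} := fun k =>
    Nat.rec ⟨x₀, h₀⟩ (fun k x => ⟨g k x.1 x.2, hgP k x.1 x.2⟩) k
  exact ⟨fun k => (f k).1, fun k => ⟨(f k).2, hgQ k _ (f k).2⟩⟩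

variable {R : Type*} [CommRing R] {M : Type*} [AddCommGroup M] [Module R M]

theorem exists_mem_associatedPrimes_annihilator_le_notMem [IsNoetherianRing R]
    {a : R} {x : M} (hx : ∀ i : ℕ, a ^ i • x ≠ 0) :
    ∃ q ∈ associatedPrimes R M, (R ∙ x).annihilator ≤ q ∧ a ∉ q := by
  let J : ℕ →o Ideal R := ⟨fun i => (R ∙ a ^ i • x).annihilator, monotone_nat_of_le_succ
    fun i r hr => by
      rw [Submodule.mem_annihilator_span_singleton] at hr ⊢
      rw [pow_succ', mul_smul, smul_comm, hr, smul_zero]⟩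
  obtain ⟨n, hn⟩ := monotone_stabilizes_iff_noetherian.mpr
    (inferInstanceAs (IsNoetherian R R)) J
  set y := a ^ n • x
  have hy : (⟨y, Submodule.mem_span_singleton_self y⟩ : R ∙ y) ≠ 0 := by
    simpa [Subtype.ext_iff] using hx n
  obtain ⟨q, hq, hyq⟩ := exists_le_isAssociatedPrime_of_isNoetherianRing R _ hy
  refine ⟨q, associatedPrimes.subset_of_injective (R ∙ y).injective_subtype hq, ?_, ?_⟩
  · intro r hr
    apply hyq
    rw [Submodule.mem_annihilator_span_singleton] at hr
    simp [Submodule.mem_colon_singleton, Subtype.ext_iff, y, smul_comm r, hr]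
  · intro haq
    have hzd : a ∈ ⋃ p ∈ associatedPrimes R (R ∙ y), p := Set.mem_biUnion hq haq
    rw [biUnion_associatedPrimes_eq_zero_divisors] at hzd
    obtain ⟨⟨z, hz⟩, hz0, haz⟩ := hzd
    obtain ⟨r, rfl⟩ := Submodule.mem_span_singleton.mp hz
    have hr : r ∈ J (n + 1) := by
      simpa [J, Subtype.ext_iff, y, pow_succ', mul_smul, smul_comm r] using haz
    rw [← hn (n + 1) n.le_succ] at hr
    exact hz0 (Subtype.ext ((Submodule.mem_annihilator_span_singleton _ _).mp hr))

theorem Submodule.annihilator_inf_pow_smul_top {U : Submodule R M} (I : Ideal R)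
    (hp : U.annihilator.IsPrime) (hI : ¬I ≤ U.annihilator) (k : ℕ) :
    (U ⊓ I ^ k • ⊤).annihilator = U.annihilator := by
  refine le_antisymm (fun r hr => ?_) (annihilator_mono inf_le_left)
  obtain ⟨s, hs, hsU⟩ := SetLike.not_le_iff_exists.mp fun h => hI (hp.le_of_pow_le h)
  refine (hp.mem_or_mem ?_).resolve_right hsU
  rw [mem_annihilator] at hr ⊢
  intro v hv
  rw [mul_smul]
  exact hr _ ⟨U.smul_mem s hv, smul_mem_smul hs mem_top⟩

theorem IsHausdorff.exists_notMem_pow_smul_top {I : Ideal R} [IsHausdorff I M] {x : M}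
    (hx : x ≠ 0) : ∃ n : ℕ, x ∉ I ^ n • (⊤ : Submodule R M) := by
  by_contra! h
  exact hx (IsHausdorff.haus ‹_› x fun n => SModEq.zero.mpr (h n))

theorem IsPrecomplete.exists_smodEq_of_smodEq_succ {I : Ideal R} [IsPrecomplete I M]
    {s : ℕ → M} {t : ℕ → ℕ} (ht : Monotone t) (hkt : ∀ k, k ≤ t k)
    (hs : ∀ k, s k ≡ s (k + 1) [SMOD (I ^ t k • ⊤ : Submodule R M)]) :
    ∃ L : M, ∀ k, s k ≡ L [SMOD (I ^ t k • ⊤ : Submodule R M)] := by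
  have hchain : ∀ {k n}, k ≤ n → s k ≡ s n [SMOD (I ^ t k • ⊤ : Submodule R M)] := by
    intro k n hkn
    induction n, hkn using Nat.le_induction with
    | base => rfl
    | succ n hkn ih =>
      exact ih.trans ((hs n).mono (Submodule.pow_smul_top_le I M (ht hkn)))
  obtain ⟨L, hL⟩ := IsPrecomplete.prec ‹_› fun hmn =>
    (hchain hmn).mono (Submodule.pow_smul_top_le I M (hkt _))
  exact ⟨L, fun k => (hchain (hkt k)).trans (hL (t k))⟩

section Construction

variable {I : Ideal R} {U : Submodule R M} {a : R}

theorem exists_smodEq_pow_smul_notMem_succ [IsHausdorff I M]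
    (hU : ∀ n k, a ^ n ∉ (U ⊓ I ^ k • ⊤).annihilator) {k t : ℕ} {z : M} (hz : z ∈ U)
    (hkt : k ≤ t) (hzt : ∀ i < k, a ^ i • z ∉ I ^ t • (⊤ : Submodule R M)) :
    ∃ z' t', z' ∈ U ∧ k + 1 ≤ t' ∧ (∀ i < k + 1, a ^ i • z' ∉ I ^ t' • (⊤ : Submodule R M)) ∧
      t ≤ t' ∧ z ≡ z' [SMOD (I ^ t • ⊤ : Submodule R M)] := by
  obtain ⟨u, huU, huI, hu⟩ :
      ∃ u ∈ U, u ∈ I ^ t • (⊤ : Submodule R M) ∧ a ^ k • (z + u) ≠ 0 := by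
    by_cases hzk : a ^ k • z = 0
    · obtain ⟨u, huU, huI, hu⟩ :
          ∃ u ∈ U, u ∈ I ^ t • (⊤ : Submodule R M) ∧ a ^ k • u ≠ 0 := by
        simpa [Submodule.mem_annihilator] using hU k t
      exact ⟨u, huU, huI, by rwa [smul_add, hzk, zero_add]⟩
    · exact ⟨0, U.zero_mem, Submodule.zero_mem _, by rwa [add_zero]⟩
  obtain ⟨t'', ht''⟩ := IsHausdorff.exists_notMem_pow_smul_top (I := I) hu
  have hzu : z ≡ z + u [SMOD (I ^ t • ⊤ : Submodule R M)] := by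
    simpa using (SModEq.refl z).add (SModEq.zero.mpr huI).symm
  refine ⟨z + u, max t'' (t + 1), U.add_mem hz huU, by omega, fun i hi hmem => ?_, by omega, hzu⟩
  rcases Nat.lt_succ_iff_lt_or_eq.mp hi with hi | rfl
  · refine hzt i hi (SModEq.zero.mp ((hzu.smul (a ^ i)).trans (SModEq.zero.mpr ?_)))
    exact Submodule.pow_smul_top_le I M (by omega) hmem
  · exact ht'' (Submodule.pow_smul_top_le I M (le_max_left _ _) hmem)

theorem exists_pow_smul_ne_zero_of_forall_pow_notMem_annihilator [IsHausdorff I M]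
    [IsPrecomplete I M] (hU : ∀ n k, a ^ n ∉ (U ⊓ I ^ k • ⊤).annihilator) :
    ∃ x : M, U.annihilator ≤ (R ∙ x).annihilator ∧ ∀ i : ℕ, a ^ i • x ≠ 0 := by
  obtain ⟨f, hf⟩ := exists_seq_of_forall_exists_succ
    (P := fun k (p : M × ℕ) =>
      p.1 ∈ U ∧ k ≤ p.2 ∧ ∀ i < k, a ^ i • p.1 ∉ I ^ p.2 • (⊤ : Submodule R M))
    (Q := fun p p' => p.2 ≤ p'.2 ∧ p.1 ≡ p'.1 [SMOD (I ^ p.2 • ⊤ : Submodule R M)])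
    (x₀ := (0, 0)) ⟨U.zero_mem, le_rfl, by simp⟩ fun k p ⟨hp, hkp, hpk⟩ => by
      obtain ⟨z', t', hz', hkt', hzt', htt', hzz'⟩ :=
        exists_smodEq_pow_smul_notMem_succ hU hp hkp hpk
      exact ⟨(z', t'), ⟨hz', hkt', hzt'⟩, htt', hzz'⟩
  obtain ⟨L, hL⟩ := IsPrecomplete.exists_smodEq_of_smodEq_succ
    (monotone_nat_of_le_succ fun k => (hf k).2.1) (fun k => (hf k).1.2.1) fun k => (hf k).2.2
  refine ⟨L, fun r hr => ?_, fun i hi => ?_⟩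
  · rw [Submodule.mem_annihilator_span_singleton]
    refine IsHausdorff.haus ‹_› _ fun n => ?_
    have hrs : r • (f n).1 = 0 := Submodule.mem_annihilator.mp hr _ (hf n).1.1
    refine SModEq.mono (Submodule.pow_smul_top_le I M (hf n).1.2.1) ?_
    simpa [hrs] using ((hL n).smul r).symm
  · apply (hf (i + 1)).1.2.2 i i.lt_succ_self
    exact SModEq.zero.mp (hi ▸ (hL (i + 1)).smul (a ^ i))

end Construction

theorem exists_pow_smul_ne_zero_of_annihilator_isPrime [IsLocalRing R]
    [IsAdicComplete (maximalIdeal R) M] {U : Submodule R M} (hp : U.annihilator.IsPrime)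
    {a : R} (ha : a ∉ U.annihilator) :
    ∃ x : M, U.annihilator ≤ (R ∙ x).annihilator ∧ ∀ i : ℕ, a ^ i • x ≠ 0 := by
  by_cases hm : maximalIdeal R ≤ U.annihilator
  · have hunit : IsUnit a := IsLocalRing.notMem_maximalIdeal.mp fun h => ha (hm h)
    obtain ⟨x, hxU, hx0⟩ :=
      U.ne_bot_iff.mp fun h => hp.ne_top (by rw [h, Submodule.annihilator_bot])
    exact ⟨x, Submodule.annihilator_mono (Submodule.span_singleton_le_iff_mem _ _ |>.mpr hxU),
      fun i => (hunit.pow i).smul_eq_zero.not.mpr hx0⟩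
  · refine exists_pow_smul_ne_zero_of_forall_pow_notMem_annihilator (I := maximalIdeal R)
      fun n k => ?_
    rw [Submodule.annihilator_inf_pow_smul_top _ hp hm]
    exact fun h => ha (hp.mem_of_pow_mem n h)

theorem koatt_eq_inf_of_associatedPrimes_of_complete
    (R : Type u) [CommRing R] [IsNoetherianRing R] [IsLocalRing R]
    (M : Type v) [AddCommGroup M] [Module R M]
    [IsAdicComplete (maximalIdeal R) M]
    (p : Ideal R) (hp : p ∈ Koatt R M) :
    ∃ S ⊆ associatedPrimes R M, S.Nonempty ∧ p = sInf S := by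
  obtain ⟨hp, U, rfl⟩ := hp
  have avoid : ∀ a ∉ U.annihilator, ∃ q ∈ associatedPrimes R M, U.annihilator ≤ q ∧ a ∉ q := by
    intro a ha
    obtain ⟨x, hUx, hx⟩ := exists_pow_smul_ne_zero_of_annihilator_isPrime hp ha
    obtain ⟨q, hq, hxq, haq⟩ := exists_mem_associatedPrimes_annihilator_le_notMem hx
    exact ⟨q, hq, hUx.trans hxq, haq⟩
  refine ⟨{q ∈ associatedPrimes R M | U.annihilator ≤ q}, Set.sep_subset _ _, ?_, ?_⟩
  · obtain ⟨q, hq, hUq, -⟩ := avoid 1 ((Ideal.ne_top_iff_one _).mp hp.ne_top)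
    exact ⟨q, hq, hUq⟩
  · refine le_antisymm (le_sInf fun q hq => hq.2) fun b hb => ?_
    by_contra hbU
    obtain ⟨q, hq, hUq, hbq⟩ := avoid b hbU
    exact hbq (Submodule.mem_sInf.mp hb q ⟨hq, hUq⟩)
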